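/- Let m ≥ 1 and let Φ be a ℂ-linear map on the space of 2^m × 2^m complex matrices (indexed by Fin m → Fin 2). Suppose that for every m-qubit Pauli string W there exist complex coefficients a_{W,V}, indexed by the diagonal Pauli strings V ∈ {𝟙,Z}^{⊗m}, such that Φ(W) = Σ_V a_{W,V} · V·W. Then for every diagonal Pauli string Λ ∈ {𝟙,Z}^{⊗m} and every 2^m × 2^m matrix ρ, Φ(Λ ρ Λ) = Λ Φ(ρ) Λ. -/

import Mathlib

/-!
Both `ρ ↦ Φ (Λ ρ Λ)` and `ρ ↦ Λ Φ(ρ) Λ` are linear, so it suffices to compare them on Pauli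
strings, which span all matrices because the four Pauli matrices span the `2 × 2` ones.
Conjugation by a diagonal Pauli string `Λ` multiplies each Pauli string `W` by a sign `ε`
(one factor `-1` for every qubit where `Λ` has a `Z` and `W` an `X` or `Y`), and `Λ` commutes
with every diagonal Pauli string `V`. Hence
`Φ (Λ W Λ) = ε Φ W = ∑ a_V • V (ε W) = ∑ a_V • V (Λ W Λ) = Λ Φ(W) Λ`.
-/

open Matrix

/-- The four Pauli matrices `𝟙, X, Y, Z`. -/
noncomputable def pauli : Fin 4 → Matrix (Fin 2) (Fin 2) ℂ
  | 0 => !![1, 0; 0, 1]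
  | 1 => !![0, 1; 1, 0]
  | 2 => !![0, -Complex.I; Complex.I, 0]
  | 3 => !![1, 0; 0, -1]

/-- The `m`-qubit Pauli string determined by `s : Fin m → Fin 4`: the `m`-fold Kronecker
product of the matrices `pauli (s i)`, with entries `∏ i, (pauli (s i)) (a i) (b i)`. -/
noncomputable def pauliString {m : ℕ} (s : Fin m → Fin 4) :
    Matrix (Fin m → Fin 2) (Fin m → Fin 2) ℂ :=
  Matrix.of fun a b => ∏ i, pauli (s i) (a i) (b i)

/-- The diagonal Pauli string in `{𝟙, Z}^{⊗m}` determined by `t : Fin m → Bool`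
(`Z` where `t` is true, `𝟙` elsewhere). -/
noncomputable def diagPauliString {m : ℕ} (t : Fin m → Bool) :
    Matrix (Fin m → Fin 2) (Fin m → Fin 2) ℂ :=
  pauliString (fun i => if t i then 3 else 0)

theorem LinearMap.map_conj_eq_conj_map {R A ι κ : Type*} [CommSemiring R] [Semiring A]
    [Algebra R A] [Fintype κ] (Φ : A →ₗ[R] A) (Λ : A) (W : ι → A)
    (hW : Submodule.span R (Set.range W) = ⊤) (V : κ → A) (hV : ∀ k, Commute Λ (V k))
    (ε : ι → R) (hΛW : ∀ i, Λ * W i * Λ = ε i • W i)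
    (hΦ : ∀ i, ∃ a : κ → R, Φ (W i) = ∑ k, a k • (V k * W i)) (ρ : A) :
    Φ (Λ * ρ * Λ) = Λ * Φ ρ * Λ := by
  suffices Φ ∘ₗ mulLeftRight R (Λ, Λ) = mulLeftRight R (Λ, Λ) ∘ₗ Φ from
    LinearMap.congr_fun this ρ
  refine ext_on_range hW fun i => ?_
  obtain ⟨a, ha⟩ := hΦ i
  have hconj (k : κ) : Λ * (V k * W i) * Λ = V k * (Λ * W i * Λ) := by
    rw [← mul_assoc, (hV k).eq, mul_assoc, mul_assoc, mul_assoc]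
  simp only [comp_apply, mulLeftRight_apply]
  calc Φ (Λ * W i * Λ) = ε i • ∑ k, a k • (V k * W i) := by rw [hΛW, map_smul, ha]
    _ = ∑ k, a k • (V k * (Λ * W i * Λ)) := by
      simp only [hΛW, Finset.smul_sum, mul_smul_comm, smul_comm (ε i)]
    _ = Λ * (∑ k, a k • (V k * W i)) * Λ := by
      simp only [Finset.mul_sum, Finset.sum_mul, mul_smul_comm, smul_mul_assoc, hconj]
    _ = Λ * Φ (W i) * Λ := by rw [ha]

namespace Matrix

variable {R α κ : Type*} [CommSemiring R] [Fintype κ]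

def piKron (A : κ → Matrix α α R) : Matrix (κ → α) (κ → α) R :=
  of fun a b => ∏ i, A i (a i) (b i)

theorem piKron_smul (c : κ → R) (A : κ → Matrix α α R) :
    piKron (fun i => c i • A i) = (∏ i, c i) • piKron A := by
  ext a b
  simp only [piKron, of_apply, smul_apply, smul_eq_mul, Finset.prod_mul_distrib]

theorem piKron_mul [Fintype α] [DecidableEq κ] (A B : κ → Matrix α α R) :
    piKron A * piKron B = piKron fun i => A i * B i := by
  ext a b
  simp only [piKron, mul_apply, of_apply, Fintype.prod_sum, Finset.prod_mul_distrib]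

theorem single_one_apply_eq_prod [DecidableEq α] [DecidableEq κ] (a b u v : κ → α) :
    single a b (1 : R) u v = ∏ i, single (a i) (b i) (1 : R) (u i) (v i) := by
  simp only [single_apply, Fintype.prod_boole, funext_iff, forall_and]

theorem span_range_piKron_eq_top {ι : Type*} [Fintype α] [DecidableEq α] [Fintype ι]
    [DecidableEq κ] (σ : ι → Matrix α α R) (hσ : Submodule.span R (Set.range σ) = ⊤) :
    Submodule.span R (Set.range fun s : κ → ι => piKron fun i => σ (s i)) = ⊤ := by
  refine Submodule.eq_top_iff'.mpr fun M => ?_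
  rw [matrix_eq_sum_single M]
  refine Submodule.sum_mem _ fun (a : κ → α) _ => Submodule.sum_mem _ fun (b : κ → α) _ => ?_
  rw [← mul_one (M a b), ← smul_eq_mul, ← smul_single]
  refine Submodule.smul_mem _ _ ?_
  choose c hc using fun i => (Submodule.mem_span_range_iff_exists_fun R).mp
    (hσ ▸ Submodule.mem_top (x := single (a i) (b i) (1 : R)))
  have hsingle :
      single a b (1 : R) = ∑ s : κ → ι, (∏ i, c i (s i)) • piKron fun i => σ (s i) := by
    ext u v
    simp only [single_one_apply_eq_prod, ← hc, sum_apply, smul_apply, smul_eq_mul, piKron,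
      of_apply, Fintype.prod_sum, Finset.prod_mul_distrib]
  rw [hsingle]
  exact Submodule.sum_mem _ fun s _ => Submodule.smul_mem _ _ (Submodule.subset_span ⟨s, rfl⟩)

end Matrix

theorem pauli_zero : pauli 0 = 1 := by
  ext i j
  fin_cases i <;> fin_cases j <;> simp [pauli]

theorem span_range_pauli : Submodule.span ℂ (Set.range pauli) = ⊤ := by
  refine Submodule.eq_top_iff'.mpr fun M => (Submodule.mem_span_range_iff_exists_fun ℂ).mpr ?_
  refine ⟨![(M 0 0 + M 1 1) / 2, (M 0 1 + M 1 0) / 2, Complex.I * (M 0 1 - M 1 0) / 2,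
    (M 0 0 - M 1 1) / 2], ?_⟩
  ext i j
  fin_cases i <;> fin_cases j <;> simp [Fin.sum_univ_four, pauli] <;> ring_nf <;>
    simp only [Complex.I_sq] <;> ring

theorem pauli_diag_mul_pauli_mul_pauli_diag (b : Bool) (k : Fin 4) :
    pauli (if b then 3 else 0) * pauli k * pauli (if b then 3 else 0) =
      (if b ∧ (k = 1 ∨ k = 2) then -1 else 1 : ℂ) • pauli k := by
  cases b
  · simp [pauli_zero]
  · ext i j
    fin_cases k <;> fin_cases i <;> fin_cases j <;> simp [pauli, mul_apply, Fin.sum_univ_two]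

theorem commute_pauli_diag (b c : Bool) :
    Commute (pauli (if b then 3 else 0)) (pauli (if c then 3 else 0)) := by
  cases b <;> cases c <;> simp [pauli_zero]

theorem pauliString_eq_piKron {m : ℕ} (s : Fin m → Fin 4) :
    pauliString s = piKron fun i => pauli (s i) := rfl

theorem span_range_pauliString (m : ℕ) :
    Submodule.span ℂ (Set.range (pauliString (m := m))) = ⊤ :=
  span_range_piKron_eq_top pauli span_range_pauli

theorem commute_diagPauliString {m : ℕ} (t u : Fin m → Bool) :
    Commute (diagPauliString t) (diagPauliString u) := by
  simp only [Commute, SemiconjBy, diagPauliString, pauliString_eq_piKron, piKron_mul,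
    (commute_pauli_diag _ _).eq]

theorem diagPauliString_mul_pauliString_mul_diagPauliString {m : ℕ} (t : Fin m → Bool)
    (s : Fin m → Fin 4) :
    diagPauliString t * pauliString s * diagPauliString t =
      (∏ i, if t i ∧ (s i = 1 ∨ s i = 2) then -1 else 1 : ℂ) • pauliString s := by
  simp only [diagPauliString, pauliString_eq_piKron, piKron_mul,
    pauli_diag_mul_pauli_mul_pauli_diag, piKron_smul]

theorem covariance_of_diagonal_pauli_general (m : ℕ)
    (Φ : Matrix (Fin m → Fin 2) (Fin m → Fin 2) ℂ →ₗ[ℂ]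
         Matrix (Fin m → Fin 2) (Fin m → Fin 2) ℂ)
    (hΦ : ∀ s : Fin m → Fin 4, ∃ a : (Fin m → Bool) → ℂ,
      Φ (pauliString s) = ∑ t : Fin m → Bool, a t • (diagPauliString t * pauliString s)) :
    ∀ (t : Fin m → Bool) (ρ : Matrix (Fin m → Fin 2) (Fin m → Fin 2) ℂ),
      Φ (diagPauliString t * ρ * diagPauliString t)
        = diagPauliString t * Φ ρ * diagPauliString t :=
  fun t => Φ.map_conj_eq_conj_map (diagPauliString t) pauliString (span_range_pauliString m)
    diagPauliString (commute_diagPauliString t) _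
    (diagPauliString_mul_pauliString_mul_diagPauliString t) hΦ

/-- **Covariance.** If a linear map `Φ` on `2^m × 2^m` matrices sends each
Pauli string `W` into the span of `{V·W : V ∈ {𝟙,Z}^{⊗m}}`, then `Φ` is covariant with
respect to conjugation by every diagonal Pauli string `Λ ∈ {𝟙,Z}^{⊗m}`. -/
theorem covariance_of_diagonal_pauli (m : ℕ) (hm : 1 ≤ m)
    (Φ : Matrix (Fin m → Fin 2) (Fin m → Fin 2) ℂ →ₗ[ℂ]
         Matrix (Fin m → Fin 2) (Fin m → Fin 2) ℂ)
    (hΦ : ∀ s : Fin m → Fin 4, ∃ a : (Fin m → Bool) → ℂ,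
      Φ (pauliString s) = ∑ t : Fin m → Bool, a t • (diagPauliString t * pauliString s)) :
    ∀ (t : Fin m → Bool) (ρ : Matrix (Fin m → Fin 2) (Fin m → Fin 2) ℂ),
      Φ (diagPauliString t * ρ * diagPauliString t)
        = diagPauliString t * Φ ρ * diagPauliString t :=
  covariance_of_diagonal_pauli_general m Φ hΦ
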